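/- Let λ ∈ ℝ^n satisfy λ_i ≥ Q_ii for all i, let Λ = Diag(λ), and define g(x) = (1/2) xᵀ(Q − Λ)x + (c + (1/2)λ)ᵀx. Then the minimum of g over the unit box [0,1]^n equals the minimum of f(x) = (1/2) xᵀQx + cᵀx over {0,1}^n, and this common minimum is attained by a point x* ∈ {0,1}^n that is simultaneously a global minimizer of g over [0,1]^n and of f over {0,1}^n. -/

import Mathlib

/-!
Since `λ_i ≥ Q_ii`, the matrix `Q - Diag λ` has nonpositive diagonal, so `g` is concave in each
coordinate separately: along the `i`-th coordinate it equals its linear interpolation between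
`x_i = 0` and `x_i = 1` plus `½ (Q_ii - λ_i) x_i (x_i - 1) ≥ 0`. Rounding the coordinates of a box
point one at a time therefore never increases `g` and ends at a binary point. On binary points
`x_i² = x_i`, so `g = f` there, and a binary minimiser of `f` minimises `g` over the whole box.
-/

open Matrix Set Function

/-- The quadratic objective f(x) = (1/2) xᵀQx + cᵀx. -/
noncomputable def boxQPObj {n : ℕ} (Q : Matrix (Fin n) (Fin n) ℝ) (c : Fin n → ℝ)
    (x : Fin n → ℝ) : ℝ :=
  (1 / 2) * ∑ i, ∑ j, Q i j * x i * x j + ∑ i, c i * x i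

/-- Membership in the unit box [0,1]^n. -/
def unitBox {n : ℕ} (x : Fin n → ℝ) : Prop := ∀ i, 0 ≤ x i ∧ x i ≤ 1

theorem exists_binary_forall_le {ι : Type*} [Finite ι] (φ : (ι → ℝ) → ℝ) :
    ∃ x : ι → ℝ, (∀ i, x i = 0 ∨ x i = 1) ∧
      ∀ y : ι → ℝ, (∀ i, y i = 0 ∨ y i = 1) → φ x ≤ φ y := by
  obtain ⟨x, hx, hmin⟩ := (univ.pi fun _ => ({0, 1} : Set ℝ)).exists_min_image φ
    (Finite.pi fun _ => toFinite _) ⟨0, by simp⟩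
  simp only [mem_univ_pi, mem_insert_iff, mem_singleton_iff] at hx hmin
  exact ⟨x, hx, hmin⟩

theorem exists_binary_le_of_forall_update {ι : Type*} [Fintype ι] [DecidableEq ι]
    (φ : (ι → ℝ) → ℝ)
    (hφ : ∀ y : ι → ℝ, (∀ j, y j ∈ Icc 0 1) →
      ∀ i, ∃ t : ℝ, (t = 0 ∨ t = 1) ∧ φ (update y i t) ≤ φ y)
    (y : ι → ℝ) (hy : ∀ j, y j ∈ Icc 0 1) :
    ∃ z : ι → ℝ, (∀ j, z j = 0 ∨ z j = 1) ∧ φ z ≤ φ y := by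
  suffices h : ∀ s : Finset ι, ∀ y : ι → ℝ, (∀ j, y j ∈ Icc 0 1) → (∀ j ∉ s, y j = 0 ∨ y j = 1) →
      ∃ z : ι → ℝ, (∀ j, z j = 0 ∨ z j = 1) ∧ φ z ≤ φ y from
    h Finset.univ y hy fun j hj => absurd (Finset.mem_univ j) hj
  intro s
  induction s using Finset.induction_on with
  | empty => exact fun y _ hbin => ⟨y, fun j => hbin j (Finset.notMem_empty j), le_rfl⟩
  | insert i s _ ih =>
    intro y hy hbin
    obtain ⟨t, ht, hle⟩ := hφ y hy i
    have ht' : t ∈ Icc (0 : ℝ) 1 := by rcases ht with rfl | rfl <;> simp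
    obtain ⟨z, hz, hzle⟩ := ih (update y i t)
      (forall_update_iff y (p := fun _ s => s ∈ Icc 0 1) |>.2 ⟨ht', fun j _ => hy j⟩)
      (fun j hj => by
        rcases eq_or_ne j i with rfl | hji
        · simpa using ht
        · simpa [hji] using hbin j (by simp [hji, hj]))
    exact ⟨z, hz, hzle.trans hle⟩

theorem boxQPObj_eq_dotProduct {n : ℕ} (A : Matrix (Fin n) (Fin n) ℝ) (c x : Fin n → ℝ) :
    boxQPObj A c x = (1 / 2) * (x ⬝ᵥ A *ᵥ x) + c ⬝ᵥ x := by
  unfold boxQPObj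
  congr 2
  simp only [dotProduct, mulVec, Finset.mul_sum]
  exact Finset.sum_congr rfl fun i _ => Finset.sum_congr rfl fun j _ => by ring

theorem boxQPObj_add_smul {n : ℕ} (A : Matrix (Fin n) (Fin n) ℝ) (c u v : Fin n → ℝ) (t : ℝ) :
    boxQPObj A c (u + t • v) = boxQPObj A c u
      + t * ((1 / 2) * (u ⬝ᵥ A *ᵥ v + v ⬝ᵥ A *ᵥ u) + c ⬝ᵥ v)
      + (1 / 2) * (v ⬝ᵥ A *ᵥ v) * t ^ 2 := by
  simp only [boxQPObj_eq_dotProduct, mulVec_add, mulVec_smul, dotProduct_add, add_dotProduct,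
    dotProduct_smul, smul_dotProduct, smul_eq_mul]
  ring

theorem boxQPObj_add_smul_eq_interpolation {n : ℕ} (A : Matrix (Fin n) (Fin n) ℝ)
    (c u v : Fin n → ℝ) (t : ℝ) :
    boxQPObj A c (u + t • v) = (1 - t) * boxQPObj A c u + t * boxQPObj A c (u + v)
      + (1 / 2) * (v ⬝ᵥ A *ᵥ v) * (t ^ 2 - t) := by
  rw [boxQPObj_add_smul, ← one_smul ℝ v, boxQPObj_add_smul, one_smul]
  ring

theorem exists_binary_update_le {n : ℕ} (A : Matrix (Fin n) (Fin n) ℝ) (c y : Fin n → ℝ)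
    (i : Fin n) (hA : A i i ≤ 0) (hy : y i ∈ Icc 0 1) :
    ∃ t : ℝ, (t = 0 ∨ t = 1) ∧ boxQPObj A c (update y i t) ≤ boxQPObj A c y := by
  have hline : ∀ s : ℝ, update y i s = update y i 0 + s • Pi.single i 1 := by
    intro s; ext j; rcases eq_or_ne j i with rfl | hj <;> simp [*]
  have hcurv : Pi.single i 1 ⬝ᵥ A *ᵥ Pi.single i 1 = A i i := by simp
  have key : boxQPObj A c y = (1 - y i) * boxQPObj A c (update y i 0)
      + y i * boxQPObj A c (update y i 1) + (1 / 2) * A i i * (y i ^ 2 - y i) := by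
    have h := boxQPObj_add_smul_eq_interpolation A c (update y i 0) (Pi.single i 1) (y i)
    rwa [← hline, update_eq_self, hcurv, ← one_smul ℝ (Pi.single i 1 : Fin n → ℝ), ← hline] at h
  obtain ⟨hy0, hy1⟩ := hy
  have hbump : 0 ≤ (1 / 2) * A i i * (y i ^ 2 - y i) := by
    nlinarith [mul_nonneg (neg_nonneg.2 hA) (mul_nonneg hy0 (sub_nonneg.2 hy1))]
  rcases le_total (boxQPObj A c (update y i 0)) (boxQPObj A c (update y i 1)) with h | h
  · exact ⟨0, Or.inl rfl, by nlinarith⟩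
  · exact ⟨1, Or.inr rfl, by nlinarith⟩

theorem boxQPObj_sub_diagonal_of_binary {n : ℕ} (Q : Matrix (Fin n) (Fin n) ℝ) (c lam x : Fin n → ℝ)
    (hx : ∀ i, x i = 0 ∨ x i = 1) :
    boxQPObj (Q - diagonal lam) (fun i => c i + (1 / 2) * lam i) x = boxQPObj Q c x := by
  have hidem : ∀ i, x i * (lam i * x i) = lam i * x i := fun i => by
    rcases hx i with h | h <;> simp [h]
  simp only [boxQPObj_eq_dotProduct, sub_mulVec, dotProduct_sub]
  simp only [dotProduct, mulVec_diagonal, hidem, add_mul, Finset.sum_add_distrib, mul_assoc,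
    ← Finset.mul_sum]
  ring

theorem stmt_6_general {n : ℕ} (Q : Matrix (Fin n) (Fin n) ℝ) (c lam : Fin n → ℝ)
    (hlam : ∀ i, Q i i ≤ lam i) :
    ∃ xstar : Fin n → ℝ, (∀ i, xstar i = 0 ∨ xstar i = 1) ∧
      (∀ y : Fin n → ℝ, unitBox y →
        boxQPObj (Q - Matrix.diagonal lam) (fun i => c i + (1 / 2) * lam i) xstar ≤
        boxQPObj (Q - Matrix.diagonal lam) (fun i => c i + (1 / 2) * lam i) y) ∧
      (∀ y : Fin n → ℝ, (∀ i, y i = 0 ∨ y i = 1) →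
        boxQPObj Q c xstar ≤ boxQPObj Q c y) ∧
      boxQPObj (Q - Matrix.diagonal lam) (fun i => c i + (1 / 2) * lam i) xstar =
        boxQPObj Q c xstar := by
  set g := boxQPObj (Q - diagonal lam) (fun i => c i + (1 / 2) * lam i)
  have hg : ∀ x : Fin n → ℝ, (∀ i, x i = 0 ∨ x i = 1) → g x = boxQPObj Q c x :=
    boxQPObj_sub_diagonal_of_binary Q c lam
  have hdiag : ∀ i, (Q - diagonal lam) i i ≤ 0 := fun i => by simpa using hlam i
  obtain ⟨xstar, hxstar, hmin⟩ := exists_binary_forall_le (boxQPObj Q c)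
  refine ⟨xstar, hxstar, fun y hy => ?_, hmin, hg xstar hxstar⟩
  obtain ⟨z, hz, hzy⟩ := exists_binary_le_of_forall_update g
    (fun y hy i => exists_binary_update_le _ _ y i (hdiag i) (hy i)) y hy
  calc g xstar = boxQPObj Q c xstar := hg xstar hxstar
    _ ≤ boxQPObj Q c z := hmin z hz
    _ = g z := (hg z hz).symm
    _ ≤ g y := hzy

/-- Let λ_i ≥ Q_ii for all i, Λ = Diag(λ), and g(x) = (1/2) xᵀ(Q − Λ)x + (c + (1/2)λ)ᵀx.
Then the minimum of g over the unit box [0,1]^n equals the minimum of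
f(x) = (1/2) xᵀQx + cᵀx over {0,1}^n, the common minimum being attained at a binary point
x* that is simultaneously a global minimizer of g over [0,1]^n and of f over {0,1}^n. -/
theorem stmt_6 {n : ℕ} (Q : Matrix (Fin n) (Fin n) ℝ) (hQ : Q.IsSymm) (c lam : Fin n → ℝ)
    (hlam : ∀ i, Q i i ≤ lam i) :
    ∃ xstar : Fin n → ℝ, (∀ i, xstar i = 0 ∨ xstar i = 1) ∧
      (∀ y : Fin n → ℝ, unitBox y →
        boxQPObj (Q - Matrix.diagonal lam) (fun i => c i + (1 / 2) * lam i) xstar ≤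
        boxQPObj (Q - Matrix.diagonal lam) (fun i => c i + (1 / 2) * lam i) y) ∧
      (∀ y : Fin n → ℝ, (∀ i, y i = 0 ∨ y i = 1) →
        boxQPObj Q c xstar ≤ boxQPObj Q c y) ∧
      boxQPObj (Q - Matrix.diagonal lam) (fun i => c i + (1 / 2) * lam i) xstar =
        boxQPObj Q c xstar :=
  stmt_6_general Q c lam hlam
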